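/- arXiv:2411.08247 — 5 statements merged into one kernel-verified Lean document; each statement's English description precedes it below -/
import Mathlib

section
/- Let G be a finite simple graph and consider a Toggle position on G. If a vertex v has weight 0 at this position and every neighbor u of v is terminally unplayable at this position, then v is terminally unplayable at this position. -/
namespace Toggle

variable {V : Type*} [Fintype V] [DecidableEq V]

/-- The closed neighborhood `N[v]` of a vertex as a `Finset`. -/
def closedNbhd (G : SimpleGraph V) [DecidableRel G.Adj] (v : V) : Finset V :=
  insert v (G.neighborFinset v)

/-- The result of a Toggle move at `v`: flip the weight of every vertex in `N[v]`. -/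
def move (G : SimpleGraph V) [DecidableRel G.Adj] (ω : V → Bool) (v : V) : V → Bool :=
  fun u => if u ∈ closedNbhd G v then !(ω u) else ω u

/-- Total weight of a position. -/
def weight (ω : V → Bool) : ℕ := (Finset.univ.filter (fun u => ω u = true)).card

/-- Weight of a position over the closed neighborhood of `v`. -/
def nbhdWeight (G : SimpleGraph V) [DecidableRel G.Adj] (ω : V → Bool) (v : V) : ℕ :=
  ((closedNbhd G v).filter (fun u => ω u = true)).card

/-- A Toggle move at `v` is legal iff `ω v = 1` and the move strictly decreases the
weight over `N[v]`. -/
def IsLegal (G : SimpleGraph V) [DecidableRel G.Adj] (ω : V → Bool) (v : V) : Prop :=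
  ω v = true ∧ nbhdWeight G (move G ω v) v < nbhdWeight G ω v

instance (G : SimpleGraph V) [DecidableRel G.Adj] (ω : V → Bool) (v : V) :
    Decidable (IsLegal G ω v) :=
  inferInstanceAs (Decidable (ω v = true ∧ nbhdWeight G (move G ω v) v < nbhdWeight G ω v))

theorem weight_move_lt (G : SimpleGraph V) [DecidableRel G.Adj] {ω : V → Bool} {v : V}
    (h : IsLegal G ω v) : weight (move G ω v) < weight ω := by
  have key : ∀ ψ : V → Bool,
      weight ψ = ((closedNbhd G v).filter (fun u => ψ u = true)).card
        + ((Finset.univ \ closedNbhd G v).filter (fun u => ψ u = true)).card := by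
    intro ψ
    rw [weight, ← Finset.card_union_of_disjoint
      (Finset.disjoint_filter_filter Finset.disjoint_sdiff)]
    congr 1
    ext u
    simp only [Finset.mem_filter, Finset.mem_union, Finset.mem_sdiff, Finset.mem_univ,
      true_and]
    tauto
  have hout : ((Finset.univ \ closedNbhd G v).filter (fun u => move G ω v u = true))
      = ((Finset.univ \ closedNbhd G v).filter (fun u => ω u = true)) := by
    apply Finset.filter_congr
    intro u hu
    rw [Finset.mem_sdiff] at hu
    simp [move, hu.2]
  have h2 := h.2
  rw [key (move G ω v), key ω, hout]
  unfold nbhdWeight at h2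
  omega

/-- Minimal excludant of a finite set of naturals. -/
noncomputable def mex (s : Finset ℕ) : ℕ := sInf {n : ℕ | n ∉ s}

/-- The Nimber (Grundy value) of a Toggle position. -/
noncomputable def grundy (G : SimpleGraph V) [DecidableRel G.Adj] (ω : V → Bool) : ℕ :=
  mex ((Finset.univ.filter (fun v => IsLegal G ω v)).attach.image
    (fun v => grundy G (move G ω v.1)))
termination_by weight ω
decreasing_by
  have hv := v.2
  rw [Finset.mem_filter] at hv
  exact weight_move_lt G hv.2

/-- One legal Toggle move transforms `ω` into `ω'`. -/
def Step (G : SimpleGraph V) [DecidableRel G.Adj] (ω ω' : V → Bool) : Prop :=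
  ∃ v, IsLegal G ω v ∧ ω' = move G ω v

/-- `ω'` is reachable from `ω` by a (possibly empty) sequence of legal moves. -/
def Reach (G : SimpleGraph V) [DecidableRel G.Adj] (ω ω' : V → Bool) : Prop :=
  Relation.ReflTransGen (Step G) ω ω'

/-- `v` is terminally unplayable at `ω`: unplayable at `ω` and at every position
reachable from `ω`. -/
def TerminallyUnplayable (G : SimpleGraph V) [DecidableRel G.Adj] (ω : V → Bool) (v : V) :
    Prop :=
  ∀ ω', Reach G ω ω' → ¬ IsLegal G ω' v

/-- `v` is penultimately unplayable for the initial position `ω₀`: at every position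
reachable from `ω₀`, after any legal move at a vertex `u ∈ N[v]`, the vertex `v` is
terminally unplayable. -/
def PenultimatelyUnplayableAt (G : SimpleGraph V) [DecidableRel G.Adj] (ω₀ : V → Bool)
    (v : V) : Prop :=
  ∀ ω', Reach G ω₀ ω' → ∀ u ∈ closedNbhd G v, IsLegal G ω' u →
    TerminallyUnplayable G (move G ω' u) v

/-- The position `ω₀` is penultimately unplayable if every vertex is. -/
def PenultimatelyUnplayable (G : SimpleGraph V) [DecidableRel G.Adj] (ω₀ : V → Bool) :
    Prop :=
  ∀ v, PenultimatelyUnplayableAt G ω₀ v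

/-- The path graph on `Fin n`, vertices `0, 1, …, n-1` in order. -/
def pathGraph (n : ℕ) : SimpleGraph (Fin n) :=
  SimpleGraph.fromRel (fun a b => (a : ℕ) + 1 = (b : ℕ))

instance (n : ℕ) : DecidableRel (pathGraph n).Adj := fun a b =>
  decidable_of_iff _ (SimpleGraph.fromRel_adj _ a b).symm

/-- The 2×m grid graph `L_{2,m}` (0-indexed rows and columns). -/
def gridGraph (m : ℕ) : SimpleGraph (Fin 2 × Fin m) :=
  SimpleGraph.fromRel (fun a b =>
    (a.1 = b.1 ∧ (a.2 : ℕ) + 1 = (b.2 : ℕ)) ∨ (a.2 = b.2 ∧ (a.1 : ℕ) + 1 = (b.1 : ℕ)))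

instance (m : ℕ) : DecidableRel (gridGraph m).Adj := fun a b =>
  decidable_of_iff _ (SimpleGraph.fromRel_adj _ a b).symm

/-- The generalized Petersen graph `P(m,k)`; the vertex `(0, i)` is the outer vertex
`u_i` and `(1, i)` is the inner vertex `w_i` (0-indexed). -/
def petersen (m k : ℕ) : SimpleGraph (Fin 2 × Fin m) :=
  SimpleGraph.fromRel (fun a b =>
    (a.1 = 0 ∧ b.1 = 0 ∧ ((a.2 : ℕ) + 1) % m = (b.2 : ℕ)) ∨
    (a.1 = 0 ∧ b.1 = 1 ∧ a.2 = b.2) ∨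
    (a.1 = 1 ∧ b.1 = 1 ∧ ((a.2 : ℕ) + k) % m = (b.2 : ℕ)))

instance (m k : ℕ) : DecidableRel (petersen m k).Adj := fun a b =>
  decidable_of_iff _ (SimpleGraph.fromRel_adj _ a b).symm

/-- The position on `P(m,k)` where every outer vertex has weight 1 and every inner
vertex has weight 0. -/
def P01 (m : ℕ) : Fin 2 × Fin m → Bool := fun p => decide (p.1 = 0)

/-- The position on `P(m,k)` where every inner vertex has weight 1 and every outer
vertex has weight 0. -/
def P10 (m : ℕ) : Fin 2 × Fin m → Bool := fun p => decide (p.1 = 1)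

/-- The position where every vertex has weight 1. -/
def P11 (m : ℕ) : Fin 2 × Fin m → Bool := fun _ => true

/-- The Toggle position `H_m` on `L_{2,m}` (columns 0-indexed): for `m ≠ 3`, weight 0
exactly at `(0,0), (0,m-1), (1,0), (1,1), (1,m-2), (1,m-1)`; for `m = 3`, weight 0
exactly at `(0,0), (0,2), (1,0), (1,2)`. -/
def Hpos (m : ℕ) : Fin 2 × Fin m → Bool := fun p =>
  if m = 3 then !(decide ((p.2 : ℕ) = 0 ∨ (p.2 : ℕ) = 2))
  else !(decide ((p.1 = 0 ∧ ((p.2 : ℕ) = 0 ∨ (p.2 : ℕ) = m - 1)) ∨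
                 (p.1 = 1 ∧ ((p.2 : ℕ) ≤ 1 ∨ m - 2 ≤ (p.2 : ℕ)))))

/-- The Toggle position `D_m` on `L_{2,m}` (columns 0-indexed): weight 0 exactly at
`(0,0), (0,m-2), (0,m-1), (1,0), (1,1), (1,m-1)`. -/
def Dpos (m : ℕ) : Fin 2 × Fin m → Bool := fun p =>
  !(decide ((p.1 = 0 ∧ ((p.2 : ℕ) = 0 ∨ m - 2 ≤ (p.2 : ℕ))) ∨
            (p.1 = 1 ∧ ((p.2 : ℕ) ≤ 1 ∨ (p.2 : ℕ) = m - 1))))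

/-- The Nimber of the position `H_m`. -/
noncomputable def GH (m : ℕ) : ℕ := grundy (gridGraph m) (Hpos m)

/-- The Nimber of the position `D_m`. -/
noncomputable def GD (m : ℕ) : ℕ := grundy (gridGraph m) (Dpos m)

/-- The cycle graph `C_m` on `Fin m`. -/
def cycleGraph (m : ℕ) : SimpleGraph (Fin m) :=
  SimpleGraph.fromRel (fun a b => ((a : ℕ) + 1) % m = (b : ℕ))

open scoped Classical in
/-- The Nimber of a position of Jacob's Ladder on `C_m`: a position is the `Finset` of
not-yet-removed vertices, and a move at a remaining vertex `v` removes all remaining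
vertices at distance at most 2 from `v` in `C_m`. -/
noncomputable def jlGrundy (m : ℕ) (S : Finset (Fin m)) : ℕ :=
  mex (S.attach.image (fun v =>
    jlGrundy m (S.filter (fun u => 2 < (cycleGraph m).dist v.1 u))))
termination_by S.card
decreasing_by
  apply Finset.card_lt_card
  rw [Finset.ssubset_iff_of_subset (Finset.filter_subset _ _)]
  exact ⟨v.1, v.2, by simp [SimpleGraph.dist_self]⟩

end Toggle

/-- If a vertex `v` has weight 0 at a Toggle position and every neighbor
of `v` is terminally unplayable at this position, then `v` is terminally unplayable
at this position. -/
theorem statement0 {V : Type*} [Fintype V] [DecidableEq V]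
    (G : SimpleGraph V) [DecidableRel G.Adj] (ω : V → Bool) (v : V)
    (h0 : ω v = false)
    (hnb : ∀ u, G.Adj v u → Toggle.TerminallyUnplayable G ω u) :
    Toggle.TerminallyUnplayable G ω v := by
  have key : ∀ ω', Toggle.Reach G ω ω' → ω' v = false := by
    intro ω' hr
    induction hr with
    | refl => exact h0
    | @tail b c hab hbc ih =>
      obtain ⟨u, hu, rfl⟩ := hbc
      by_cases hmem : v ∈ Toggle.closedNbhd G u
      · rcases Finset.mem_insert.mp hmem with h | h
        · subst h; exact absurd hu.1 (by simp [ih])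
        · rw [SimpleGraph.mem_neighborFinset] at h
          exact absurd hu (hnb u h.symm _ hab)
      · simpa [Toggle.move, hmem] using ih
  intro ω' hr hl
  exact absurd hl.1 (by simp [key ω' hr])
end

section
/- Let G be a finite simple graph with maximum degree at most 2, with the initial Toggle assignment in which every vertex has weight 1. Then G is penultimately unplayable. -/
namespace Toggle

variable {V : Type*} [Fintype V] [DecidableEq V]

/-! ### Auxiliary material for statement1 -/

section Statement1Aux

variable {G : SimpleGraph V} [DecidableRel G.Adj]

lemma mem_closedNbhd {u v : V} : u ∈ closedNbhd G v ↔ u = v ∨ G.Adj v u := by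
  simp [closedNbhd]

lemma self_mem_closedNbhd (v : V) : v ∈ closedNbhd G v :=
  mem_closedNbhd.mpr (Or.inl rfl)

lemma closedNbhd_comm {u v : V} : u ∈ closedNbhd G v ↔ v ∈ closedNbhd G u := by
  rw [mem_closedNbhd, mem_closedNbhd]
  constructor <;> rintro (rfl | h)
  · exact Or.inl rfl
  · exact Or.inr h.symm
  · exact Or.inl rfl
  · exact Or.inr h.symm

lemma card_closedNbhd (v : V) : (closedNbhd G v).card = G.degree v + 1 := by
  rw [closedNbhd, Finset.card_insert_of_notMem (by simp),
    G.card_neighborFinset_eq_degree]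

lemma move_apply_mem (ω : V → Bool) (v : V) {u : V} (h : u ∈ closedNbhd G v) :
    move G ω v u = !(ω u) := if_pos h

lemma move_apply_notMem (ω : V → Bool) (v : V) {u : V} (h : u ∉ closedNbhd G v) :
    move G ω v u = ω u := if_neg h

lemma nbhdWeight_move_self (ω : V → Bool) (v : V) :
    nbhdWeight G (move G ω v) v + nbhdWeight G ω v = (closedNbhd G v).card := by
  unfold nbhdWeight
  rw [show (closedNbhd G v).filter (fun u => move G ω v u = true)
      = (closedNbhd G v).filter (fun u => ¬ (ω u = true)) from
      Finset.filter_congr (fun u hu => by simp [move, hu])]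
  rw [add_comm]
  exact Finset.card_filter_add_card_filter_not _

lemma legal_two_mul {ω : V → Bool} {v : V} (h : IsLegal G ω v) :
    (closedNbhd G v).card < 2 * nbhdWeight G ω v := by
  have h1 := nbhdWeight_move_self (G := G) ω v
  have h2 := h.2
  omega

lemma degree_pos_of_adj {u v : V} (h : G.Adj u v) : 0 < G.degree u := by
  rw [← G.card_neighborFinset_eq_degree]
  exact Finset.card_pos.mpr ⟨v, by simpa using h⟩

/-- In a graph of maximum degree ≤ 2, a vertex with two distinct neighbors has no
other neighbors. -/
lemma two_nbrs (hdeg : ∀ v, G.degree v ≤ 2) {v a b c : V}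
    (ha : G.Adj v a) (hb : G.Adj v b) (hc : G.Adj v c) (hab : a ≠ b) :
    c = a ∨ c = b := by
  by_contra hcon
  push_neg at hcon
  have hsub : ({a, b, c} : Finset V) ⊆ G.neighborFinset v := by
    intro x hx
    simp only [Finset.mem_insert, Finset.mem_singleton] at hx
    rcases hx with rfl | rfl | rfl <;> simpa
  have h3 : ({a, b, c} : Finset V).card = 3 := by
    rw [Finset.card_insert_of_notMem (by simp [hab, Ne.symm hcon.1]),
      Finset.card_insert_of_notMem (by simp [Ne.symm hcon.2]),
      Finset.card_singleton]
  have := Finset.card_le_card hsub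
  rw [h3, G.card_neighborFinset_eq_degree] at this
  have := hdeg v
  omega

/-- If a move at `u` is legal and `u` has a neighbor, then some neighbor of `u` has
weight 1. -/
lemma exists_true_nbr {ω : V → Bool} {u v₀ : V} (hlegal : IsLegal G ω u)
    (hv₀ : G.Adj u v₀) : ∃ x, G.Adj u x ∧ ω x = true := by
  by_contra hcon
  push_neg at hcon
  have hfil : (closedNbhd G u).filter (fun z => ω z = true) ⊆ {u} := by
    intro z hz
    rw [Finset.mem_filter, mem_closedNbhd] at hz
    rcases hz.1 with rfl | hadj
    · simp
    · exact absurd hz.2 (hcon z hadj)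
  have hk : nbhdWeight G ω u ≤ 1 := by
    have := Finset.card_le_card hfil
    simpa [nbhdWeight] using this
  have h2 := legal_two_mul hlegal
  rw [card_closedNbhd] at h2
  have := degree_pos_of_adj hv₀
  omega

/-- The invariant: `D` is a "dead" set of vertices. `K1`: every weight-0 vertex is in
`D`; `K0`: isolated vertices of `D` have weight 0; `K2`: a weight-1 vertex of `D`
has all neighbors of weight 0, in `D`, with all their neighbors in `D`; `K3`: every
vertex of `D` has some closed neighborhood fully inside `D` containing it. -/
def Inv (G : SimpleGraph V) [DecidableRel G.Adj] (D : Finset V) (ω : V → Bool) : Prop :=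
  (∀ v, ω v = false → v ∈ D) ∧
  (∀ v ∈ D, G.degree v = 0 → ω v = false) ∧
  (∀ v ∈ D, ω v = true → ∀ w, G.Adj v w →
      ω w = false ∧ w ∈ D ∧ ∀ x, G.Adj w x → x ∈ D) ∧
  (∀ v ∈ D, ∃ z ∈ closedNbhd G v, ∀ x ∈ closedNbhd G z, x ∈ D)

lemma Inv.not_legal {D : Finset V} {ω : V → Bool} (hInv : Inv G D ω) {v : V}
    (hv : v ∈ D) : ¬ IsLegal G ω v := by
  intro hlegal
  have hvt : ω v = true := hlegal.1
  by_cases hd0 : G.degree v = 0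
  · have := hInv.2.1 v hv hd0
    rw [hvt] at this
    simp at this
  · have hfil : (closedNbhd G v).filter (fun z => ω z = true) ⊆ {v} := by
      intro z hz
      rw [Finset.mem_filter, mem_closedNbhd] at hz
      rcases hz.1 with rfl | hadj
      · simp
      · have := (hInv.2.2.1 v hv hvt z hadj).1
        rw [this] at hz
        exact absurd hz.2 (by simp)
    have hk : nbhdWeight G ω v ≤ 1 := by
      have := Finset.card_le_card hfil
      simpa [nbhdWeight] using this
    have h2 := legal_two_mul hlegal
    rw [card_closedNbhd] at h2
    omega

lemma Inv.step (hdeg : ∀ v, G.degree v ≤ 2) {D : Finset V} {ω : V → Bool} {u : V}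
    (hInv : Inv G D ω) (hlegal : IsLegal G ω u) :
    Inv G (D ∪ closedNbhd G u) (move G ω u) := by
  obtain ⟨hK1, hK0, hK2, hK3⟩ := hInv
  have hut : ω u = true := hlegal.1
  have huD : u ∉ D := fun h => Inv.not_legal ⟨hK1, hK0, hK2, hK3⟩ h hlegal
  refine ⟨?_, ?_, ?_, ?_⟩
  · -- K1
    intro v hv
    by_cases hvN : v ∈ closedNbhd G u
    · exact Finset.mem_union_right _ hvN
    · rw [move_apply_notMem ω u hvN] at hv
      exact Finset.mem_union_left _ (hK1 v hv)
  · -- K0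
    intro v hvD hd0
    by_cases hvN : v ∈ closedNbhd G u
    · rcases mem_closedNbhd.mp hvN with rfl | hadj
      · rw [move_apply_mem ω v hvN, hut]; rfl
      · exact absurd (degree_pos_of_adj hadj.symm) (by omega)
    · rw [move_apply_notMem ω u hvN]
      exact hK0 v (by rcases Finset.mem_union.mp hvD with h | h; exacts [h, absurd h hvN]) hd0
  · -- K2
    intro v hvD hvt w hvw
    by_cases hvN : v ∈ closedNbhd G u
    · -- Case A: v is in N[u], so its old weight was 0
      rw [move_apply_mem ω u hvN] at hvt
      have hωv : ω v = false := by simpa using hvt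
      have hvu : G.Adj u v := by
        rcases mem_closedNbhd.mp hvN with rfl | hadj
        · rw [hut] at hωv; exact absurd hωv (by simp)
        · exact hadj
      have hvDold : v ∈ D := hK1 v hωv
      by_cases hwu : w = u
      · subst hwu
        refine ⟨?_, Finset.mem_union_right _ (self_mem_closedNbhd w), ?_⟩
        · rw [move_apply_mem ω w (self_mem_closedNbhd w), hut]; rfl
        · intro x hx
          exact Finset.mem_union_right _ (mem_closedNbhd.mpr (Or.inr hx))
      · by_cases hwN : w ∈ closedNbhd G u
        · -- w is a neighbor of u distinct from u
          have hadjuw : G.Adj u w := by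
            rcases mem_closedNbhd.mp hwN with rfl | h
            · exact absurd rfl hwu
            · exact h
          have hωw : ω w = true := by
            obtain ⟨x, hx, hxt⟩ := exists_true_nbr hlegal hvu
            rcases two_nbrs hdeg hvu hadjuw hx hvw.ne with rfl | rfl
            · rw [hωv] at hxt; exact absurd hxt (by simp)
            · exact hxt
          refine ⟨?_, Finset.mem_union_right _ hwN, ?_⟩
          · rw [move_apply_mem ω u hwN, hωw]; rfl
          · intro x hx
            rcases two_nbrs hdeg hadjuw.symm hvw.symm hx hvu.ne with rfl | rfl
            · exact Finset.mem_union_right _ (self_mem_closedNbhd x)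
            · exact Finset.mem_union_right _ hvN
        · -- w is outside N[u]
          obtain ⟨z, hz, hsub⟩ := hK3 v hvDold
          have hzw : z = w := by
            rcases mem_closedNbhd.mp hz with rfl | hadj
            · exact absurd (hsub u (mem_closedNbhd.mpr (Or.inr hvu.symm))) huD
            · rcases two_nbrs hdeg hvu.symm hvw hadj (fun h => hwu h.symm) with rfl | rfl
              · exact absurd (hsub z (self_mem_closedNbhd z)) huD
              · rfl
          rw [hzw] at hsub
          have hwD : w ∈ D := hsub w (self_mem_closedNbhd w)
          have hωw : ω w = false := by
            rcases Bool.eq_false_or_eq_true (ω w) with h | h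
            · exact absurd ((hK2 w hwD h v hvw.symm).2.2 u hvu.symm) huD
            · exact h
          refine ⟨?_, Finset.mem_union_left _ hwD, ?_⟩
          · rw [move_apply_notMem ω u hwN]; exact hωw
          · intro x hx
            exact Finset.mem_union_left _ (hsub x (mem_closedNbhd.mpr (Or.inr hx)))
    · -- Case B: v outside N[u]
      rw [move_apply_notMem ω u hvN] at hvt
      have hvDold : v ∈ D := by
        rcases Finset.mem_union.mp hvD with h | h; exacts [h, absurd h hvN]
      obtain ⟨hωw, hwD, hw3⟩ := hK2 v hvDold hvt w hvw
      have hwN : w ∉ closedNbhd G u := by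
        intro h
        rcases mem_closedNbhd.mp h with rfl | hadj
        · exact huD hwD
        · exact huD (hw3 u hadj.symm)
      exact ⟨by rw [move_apply_notMem ω u hwN]; exact hωw,
        Finset.mem_union_left _ hwD, fun x hx => Finset.mem_union_left _ (hw3 x hx)⟩
  · -- K3
    intro v hvD
    rcases Finset.mem_union.mp hvD with h | h
    · obtain ⟨z, hz, hsub⟩ := hK3 v h
      exact ⟨z, hz, fun x hx => Finset.mem_union_left _ (hsub x hx)⟩
    · exact ⟨u, closedNbhd_comm.mp h, fun x hx => Finset.mem_union_right _ hx⟩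

lemma reach_inv (hdeg : ∀ v, G.degree v ≤ 2) {D : Finset V} {ω ω' : V → Bool}
    (hInv : Inv G D ω) (hr : Reach G ω ω') : ∃ D', D ⊆ D' ∧ Inv G D' ω' := by
  induction hr with
  | refl => exact ⟨D, subset_rfl, hInv⟩
  | tail hab hbc ih =>
    obtain ⟨D₁, hsub, hI⟩ := ih
    obtain ⟨u, hu, rfl⟩ := hbc
    exact ⟨D₁ ∪ closedNbhd G u, hsub.trans Finset.subset_union_left, hI.step hdeg hu⟩

end Statement1Aux

end Toggle

/-- a finite simple graph of maximum degree at most 2, with every vertex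
initially of weight 1, is penultimately unplayable. -/
theorem statement1 {V : Type*} [Fintype V] [DecidableEq V]
    (G : SimpleGraph V) [DecidableRel G.Adj]
    (hdeg : ∀ v, G.degree v ≤ 2) :
    Toggle.PenultimatelyUnplayable G (fun _ => true) := by
  intro v ω' hreach u huN hlegal
  have hInv0 : Toggle.Inv G ∅ (fun _ => true) :=
    ⟨fun v h => by simp at h, fun v h => by simp at h,
     fun v h => by simp at h, fun v h => by simp at h⟩
  obtain ⟨D, -, hI⟩ := Toggle.reach_inv hdeg hInv0 hreach
  have hI2 := hI.step hdeg hlegal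
  have hvmem : v ∈ D ∪ Toggle.closedNbhd G u :=
    Finset.mem_union_right _ (Toggle.closedNbhd_comm.mp huN)
  intro ω'' hreach''
  obtain ⟨D₂, hsub, hI3⟩ := Toggle.reach_inv hdeg hI2 hreach''
  exact hI3.not_legal (hsub hvmem)
end

section
/- For m ≥ 4, the Nimber of the Toggle position H_m satisfies G(H_m) = mex{ x_3, x_4, …, x_s, y_3, y_4, …, y_s }, where x_i = G(H_i) XOR G(H_{m+1−i}), y_i = G(D_i) XOR G(D_{m+1−i}) for i ∈ {3,4,…,s}, and s = ⌊(m+1)/2⌋. -/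
/-!
Every position reachable from `H_m` is a chain of blocks glued along all-zero columns; in a
block on `k` columns each row carries one run of ones, starting at column `1` or `2` and ending
at column `k - 2` or `k - 3`. A legal move in a block lies in a column `j` with
`2 ≤ j ≤ k - 3` and clears that column, which splits the block into blocks on `j + 1` and `k - j`
columns. Moves in different blocks never interact, so the Grundy value of a chain is the nim-sum
of the values of its blocks. The value of a block depends only on `k` and on whether the same row
starts early and ends late (as in `H_k`) or not (as in `D_k`); the resulting mex recursion is
symmetric under `i ↦ m + 1 - i`, which halves the range of `i`.
-/

namespace Toggle

theorem mex_notMem (s : Finset ℕ) : mex s ∉ s :=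
  Nat.sInf_mem (s := {n | n ∉ s}) (s : Set ℕ).toFinite.infinite_compl.nonempty

theorem mem_of_lt_mex {s : Finset ℕ} {n : ℕ} (h : n < mex s) : n ∈ s := by
  by_contra hn
  exact (Nat.sInf_le hn).not_gt h

theorem mex_eq_of_forall_lt_mem {s : Finset ℕ} {x : ℕ} (hx : x ∉ s) (h : ∀ y < x, y ∈ s) :
    mex s = x :=
  le_antisymm (Nat.sInf_le hx) (not_lt.1 fun hlt => mex_notMem s (h _ hlt))

theorem mex_union_image_xor (A B : Finset ℕ) :
    mex (A.image (· ^^^ mex B) ∪ B.image (mex A ^^^ ·)) = mex A ^^^ mex B := by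
  refine mex_eq_of_forall_lt_mem ?_ fun y hy => ?_
  · simp only [Finset.mem_union, Finset.mem_image, Nat.xor_right_inj, Nat.xor_left_inj]
    rintro (⟨x, hx, rfl⟩ | ⟨x, hx, rfl⟩)
    · exact mex_notMem A hx
    · exact mex_notMem B hx
  · rcases Nat.lt_xor_cases hy with h | h
    · exact Finset.mem_union_left _ (Finset.mem_image.2 ⟨_, mem_of_lt_mex h, by simp⟩)
    · exact Finset.mem_union_right _ (Finset.mem_image.2 ⟨_, mem_of_lt_mex h, by simp⟩)

theorem image_product_univ_bool {α β : Type*} [DecidableEq α] [DecidableEq β] (s : Finset α)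
    (f : α × Bool → β) :
    (s ×ˢ Finset.univ).image f =
      s.image (fun a => f (a, true)) ∪ s.image (fun a => f (a, false)) := by
  ext
  simp only [Finset.mem_image, Finset.mem_product, Finset.mem_univ, and_true, Finset.mem_union,
    Prod.exists, Bool.exists_bool, exists_or]
  exact or_comm

theorem image_Icc_half_xor (g : ℕ → ℕ) (m : ℕ) :
    (Finset.Icc 3 ((m + 1) / 2)).image (fun i => g i ^^^ g (m + 1 - i)) =
      (Finset.Icc 3 (m - 2)).image (fun i => g i ^^^ g (m + 1 - i)) := by
  ext x
  simp only [Finset.mem_image, Finset.mem_Icc]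
  constructor
  · rintro ⟨i, hi, rfl⟩
    exact ⟨i, ⟨hi.1, by omega⟩, rfl⟩
  · rintro ⟨i, hi, rfl⟩
    by_cases hhalf : i ≤ (m + 1) / 2
    · exact ⟨i, ⟨hi.1, hhalf⟩, rfl⟩
    · refine ⟨m + 1 - i, ⟨by omega, by omega⟩, ?_⟩
      rw [show m + 1 - (m + 1 - i) = i by omega, Nat.xor_comm]

section General

variable {V : Type*} [Fintype V] [DecidableEq V] (G : SimpleGraph V) [DecidableRel G.Adj]

def successors (ω : V → Bool) : Finset (V → Bool) :=
  (Finset.univ.filter (IsLegal G ω)).image (move G ω)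

variable {G} in
theorem mem_successors {ω ω' : V → Bool} : ω' ∈ successors G ω ↔ Step G ω ω' := by
  simp [successors, Step, eq_comm]

variable {G} in
theorem weight_lt_of_mem_successors {ω ω' : V → Bool} (h : ω' ∈ successors G ω) :
    weight ω' < weight ω := by
  obtain ⟨v, hv, rfl⟩ := mem_successors.1 h
  exact weight_move_lt G hv

theorem grundy_eq_mex_successors (ω : V → Bool) :
    grundy G ω = mex ((successors G ω).image (grundy G)) := by
  rw [grundy, successors, Finset.image_image]
  congr 1
  ext n
  simp

variable {G} in
theorem not_isLegal_of_eq_false {ω : V → Bool} {v : V} (h : ω v = false) : ¬ IsLegal G ω v :=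
  fun hv => by simp [hv.1] at h

theorem isLegal_iff_card_lt (ω : V → Bool) (v : V) :
    IsLegal G ω v ↔ ω v = true ∧ (closedNbhd G v).card < 2 * nbhdWeight G ω v := by
  have hflip : nbhdWeight G (move G ω v) v = (closedNbhd G v).card - nbhdWeight G ω v := by
    rw [nbhdWeight, nbhdWeight, ← Finset.card_sdiff_of_subset (Finset.filter_subset _ _),
      ← Finset.filter_not]
    exact congrArg _ (Finset.filter_congr fun u hu => by simp [move, hu])
  have hle : nbhdWeight G ω v ≤ (closedNbhd G v).card := Finset.card_filter_le _ _
  rw [IsLegal, hflip]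
  exact and_congr Iff.rfl (by omega)

end General

section Grid

variable {k : ℕ}

theorem mem_closedNbhd_gridGraph {v u : Fin 2 × Fin k} :
    u ∈ closedNbhd (gridGraph k) v ↔
      (u.2 : ℕ) = v.2 ∨ (u.1 = v.1 ∧ ((u.2 : ℕ) + 1 = v.2 ∨ (v.2 : ℕ) + 1 = u.2)) := by
  rw [closedNbhd, Finset.mem_insert, SimpleGraph.mem_neighborFinset, gridGraph,
    SimpleGraph.fromRel_adj]
  obtain ⟨⟨r, hr⟩, c⟩ := v
  obtain ⟨⟨r', hr'⟩, c'⟩ := u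
  simp only [ne_eq, Prod.ext_iff, Fin.ext_iff]
  omega

theorem isLegal_gridGraph_iff (ω : Fin 2 × Fin k → Bool) (r : Fin 2) {c : ℕ} (h1 : 1 ≤ c)
    (h2 : c + 1 < k) :
    IsLegal (gridGraph k) ω (r, ⟨c, by omega⟩) ↔
      ω (r, ⟨c, by omega⟩) = true ∧
      ((ω (r, ⟨c - 1, by omega⟩) = true ∧ ω (r, ⟨c + 1, h2⟩) = true) ∨
       (ω (r, ⟨c - 1, by omega⟩) = true ∧ ω (r + 1, ⟨c, by omega⟩) = true) ∨
       (ω (r, ⟨c + 1, h2⟩) = true ∧ ω (r + 1, ⟨c, by omega⟩) = true)) := by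
  have hr : r + 1 ≠ r := by fin_cases r <;> decide
  have hN : closedNbhd (gridGraph k) (r, ⟨c, by omega⟩) =
      {(r, ⟨c - 1, by omega⟩), (r, ⟨c + 1, h2⟩), (r + 1, ⟨c, by omega⟩), (r, ⟨c, by omega⟩)} := by
    ext ⟨r', c'⟩
    simp only [mem_closedNbhd_gridGraph, Finset.mem_insert, Finset.mem_singleton,
      Prod.mk.injEq, Fin.ext_iff]
    fin_cases r <;> fin_cases r' <;> simp <;> omega
  rw [isLegal_iff_card_lt, nbhdWeight, hN, Finset.card_filter]
  rw [Finset.sum_insert (by simp [hr.symm]; omega), Finset.sum_insert (by simp [hr.symm]),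
    Finset.sum_insert (by simp [hr]), Finset.sum_singleton,
    Finset.card_insert_of_notMem (by simp [hr.symm]; omega),
    Finset.card_insert_of_notMem (by simp [hr.symm]),
    Finset.card_insert_of_notMem (by simp [hr]), Finset.card_singleton]
  cases ω (r, ⟨c - 1, by omega⟩) <;> cases ω (r, ⟨c + 1, h2⟩) <;>
    cases ω (r + 1, ⟨c, by omega⟩) <;> cases ω (r, ⟨c, by omega⟩) <;> simp

end Grid

/-- A block on `k` columns: in row `s` the ones start at column `1`, in the other row at `2`;
in row `t` they end at column `k - 2`, in the other row at `k - 3`. For `k = 3` and `s = t`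
this would leave a single one, and the block is `H₃` instead. -/
def block (s t : Fin 2) (k : ℕ) : Fin 2 × Fin k → Bool := fun p =>
  if k = 3 ∧ s = t then decide ((p.2 : ℕ) = 1)
  else decide ((if p.1 = s then 1 else 2) ≤ (p.2 : ℕ) ∧
               (p.2 : ℕ) ≤ (if p.1 = t then k - 2 else k - 3))

/-- Glue `ω₁` and `ω₂` along one column: column `a - 1` of `ω₁` is column `0` of `ω₂`. -/
def join (a b k : ℕ) (ω₁ : Fin 2 × Fin a → Bool) (ω₂ : Fin 2 × Fin b → Bool) :
    Fin 2 × Fin k → Bool := fun p =>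
  if h : (p.2 : ℕ) < a then ω₁ (p.1, ⟨p.2, h⟩)
  else if h2 : (p.2 : ℕ) - (a - 1) < b then ω₂ (p.1, ⟨(p.2 : ℕ) - (a - 1), h2⟩)
  else false

section Block

variable {s t : Fin 2} {k : ℕ}

theorem block_eq_false_of_boundary (r : Fin 2) {c : Fin k}
    (hc : (c : ℕ) = 0 ∨ (c : ℕ) = k - 1) : block s t k (r, c) = false := by
  unfold block
  split_ifs <;> simp only [decide_eq_false_iff_not] <;> omega

theorem isLegal_block_iff (r : Fin 2) {c : ℕ} (hc : c < k) :
    IsLegal (gridGraph k) (block s t k) (r, ⟨c, hc⟩) ↔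
      2 ≤ c ∧ c + 3 ≤ k ∧ ¬(k = 5 ∧ s = t ∧ r ≠ s) := by
  by_cases hk3 : k = 3
  · subst hk3
    refine iff_of_false ?_ (by omega)
    obtain rfl | rfl | rfl : c = 0 ∨ c = 1 ∨ c = 2 := by omega
    all_goals revert s t r hc; decide
  by_cases hbd : c = 0 ∨ c = k - 1
  · exact iff_of_false (not_isLegal_of_eq_false (block_eq_false_of_boundary r hbd)) (by omega)
  rw [isLegal_gridGraph_iff _ r (by omega) (by omega)]
  simp only [block, if_neg (fun h : k = 3 ∧ s = t => hk3 h.1), decide_eq_true_eq, ne_eq]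
  have := r.isLt; have := s.isLt; have := t.isLt
  split_ifs <;> simp only [Fin.ext_iff, Fin.val_add, Fin.val_one] at * <;> omega

theorem move_block {j : ℕ} (hj : 2 ≤ j) (hjk : j + 3 ≤ k) (r : Fin 2) :
    move (gridGraph k) (block s t k) (r, ⟨j, by omega⟩) =
      join (j + 1) (k - j) k (block s (r + 1) (j + 1)) (block (r + 1) t (k - j)) := by
  funext ⟨u, c⟩
  have := u.isLt; have := r.isLt; have := s.isLt; have := t.isLt; have := c.isLt
  simp only [move, mem_closedNbhd_gridGraph, join, block]
  rw [if_neg (fun h : k = 3 ∧ s = t => by omega)]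
  split_ifs <;>
    simp only [Fin.ext_iff, Fin.val_add, Fin.val_one, ← decide_not, decide_eq_decide,
      decide_eq_false_iff_not] at * <;>
    omega

end Block

section Join

variable {a b k : ℕ} {ω₁ : Fin 2 × Fin a → Bool} {ω₂ : Fin 2 × Fin b → Bool}

theorem join_apply_left (r : Fin 2) {c : ℕ} (hc : c < k) (hca : c < a) :
    join a b k ω₁ ω₂ (r, ⟨c, hc⟩) = ω₁ (r, ⟨c, hca⟩) :=
  dif_pos hca

theorem join_apply_right (hk : a + b - 1 = k) (ha : 0 < a) (hb : 0 < b)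
    (hcut : ∀ r, ω₁ (r, ⟨a - 1, by omega⟩) = ω₂ (r, ⟨0, hb⟩)) (r : Fin 2) {c d : ℕ}
    (hc : c < k) (hcd : c = d + (a - 1)) :
    join a b k ω₁ ω₂ (r, ⟨c, hc⟩) = ω₂ (r, ⟨d, by omega⟩) := by
  simp only [join]
  split_ifs with h h'
  · obtain rfl : d = 0 := by omega
    simp only [show c = a - 1 by omega, hcut]
  · simp only [hcd, Nat.add_sub_cancel]
  · omega

theorem isLegal_join_left (r : Fin 2) {c : ℕ} (hc : c + 1 < k) (h1 : 1 ≤ c) (h2 : c + 1 < a) :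
    IsLegal (gridGraph k) (join a b k ω₁ ω₂) (r, ⟨c, by omega⟩) ↔
      IsLegal (gridGraph a) ω₁ (r, ⟨c, by omega⟩) := by
  rw [isLegal_gridGraph_iff _ r h1 hc, isLegal_gridGraph_iff _ r h1 h2,
    join_apply_left r _ (by omega), join_apply_left r _ (by omega),
    join_apply_left r _ (by omega), join_apply_left (r + 1) _ (by omega)]

theorem isLegal_join_right (hk : a + b - 1 = k) (ha : 0 < a) (hb : 0 < b)
    (hcut : ∀ r, ω₁ (r, ⟨a - 1, by omega⟩) = ω₂ (r, ⟨0, hb⟩)) (r : Fin 2) {c d : ℕ}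
    (hc : c + 1 < k) (hcd : c = d + (a - 1)) (h1 : 1 ≤ d) :
    IsLegal (gridGraph k) (join a b k ω₁ ω₂) (r, ⟨c, by omega⟩) ↔
      IsLegal (gridGraph b) ω₂ (r, ⟨d, by omega⟩) := by
  rw [isLegal_gridGraph_iff _ r (by omega) hc, isLegal_gridGraph_iff _ r h1 (by omega),
    join_apply_right hk ha hb hcut r _ hcd,
    join_apply_right hk ha hb hcut r _ (d := d - 1) (by omega),
    join_apply_right hk ha hb hcut r _ (d := d + 1) (by omega),
    join_apply_right hk ha hb hcut (r + 1) _ hcd]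

theorem move_join_left (r : Fin 2) {c : ℕ} (hc : c < k) (hca : c + 1 < a) :
    move (gridGraph k) (join a b k ω₁ ω₂) (r, ⟨c, hc⟩) =
      join a b k (move (gridGraph a) ω₁ (r, ⟨c, by omega⟩)) ω₂ := by
  funext ⟨u, d, hd⟩
  by_cases hda : d < a
  · simp only [move, mem_closedNbhd_gridGraph, join_apply_left u hd hda]
  · have hfar : (u, (⟨d, hd⟩ : Fin k)) ∉ closedNbhd (gridGraph k) (r, ⟨c, hc⟩) := by
      simp only [mem_closedNbhd_gridGraph]
      omega
    simp only [move, if_neg hfar, join, dif_neg hda]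

theorem move_join_right (hk : a + b - 1 = k) (r : Fin 2) {c d : ℕ} (hc : c < k)
    (hcd : c = d + (a - 1)) (hd : 2 ≤ d) :
    move (gridGraph k) (join a b k ω₁ ω₂) (r, ⟨c, hc⟩) =
      join a b k ω₁ (move (gridGraph b) ω₂ (r, ⟨d, by omega⟩)) := by
  funext ⟨u, e, he⟩
  by_cases hea : e < a
  · have hfar : (u, (⟨e, he⟩ : Fin k)) ∉ closedNbhd (gridGraph k) (r, ⟨c, hc⟩) := by
      simp only [mem_closedNbhd_gridGraph]
      omega
    simp only [move, if_neg hfar, join, dif_pos hea]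
  · simp only [move, join, dif_neg hea, dif_pos (show e - (a - 1) < b by omega),
      mem_closedNbhd_gridGraph, Fin.val_mk]
    split_ifs <;> first | rfl | omega

end Join

inductive IsBlockChain : (k : ℕ) → (Fin 2 × Fin k → Bool) → Prop
  | single (s t : Fin 2) {k : ℕ} (hk : 3 ≤ k) : IsBlockChain k (block s t k)
  | append {a b k : ℕ} {ω₁ : Fin 2 × Fin a → Bool} {ω₂ : Fin 2 × Fin b → Bool}
      (h₁ : IsBlockChain a ω₁) (h₂ : IsBlockChain b ω₂) (hk : a + b - 1 = k) :
      IsBlockChain k (join a b k ω₁ ω₂)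

namespace IsBlockChain

variable {a b k : ℕ} {ω : Fin 2 × Fin k → Bool} {ω₁ : Fin 2 × Fin a → Bool}
  {ω₂ : Fin 2 × Fin b → Bool}

theorem three_le (h : IsBlockChain k ω) : 3 ≤ k := by
  induction h <;> omega

theorem eq_false_of_boundary (h : IsBlockChain k ω) (r : Fin 2) {c : Fin k}
    (hc : (c : ℕ) = 0 ∨ (c : ℕ) = k - 1) : ω (r, c) = false := by
  induction h generalizing r with
  | single => exact block_eq_false_of_boundary r hc
  | @append a b k ω₁ ω₂ h₁ h₂ hk ih₁ ih₂ =>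
    have := h₁.three_le; have := h₂.three_le
    obtain ⟨c, hck⟩ := c
    rcases hc with rfl | rfl
    · rw [join_apply_left r hck (by omega)]
      exact ih₁ r (Or.inl rfl)
    · rw [join_apply_right hk (by omega) (by omega)
        (fun r => (ih₁ r (Or.inr rfl)).trans (ih₂ r (Or.inl rfl)).symm) r hck (d := b - 1)
        (by omega)]
      exact ih₂ r (Or.inr rfl)

theorem cut (h₁ : IsBlockChain a ω₁) (h₂ : IsBlockChain b ω₂) (r : Fin 2) :
    ω₁ (r, ⟨a - 1, by have := h₁.three_le; omega⟩) =
      ω₂ (r, ⟨0, by have := h₂.three_le; omega⟩) :=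
  (h₁.eq_false_of_boundary r (Or.inr rfl)).trans (h₂.eq_false_of_boundary r (Or.inl rfl)).symm

theorem isLegal_join_iff (h₁ : IsBlockChain a ω₁) (h₂ : IsBlockChain b ω₂) (hk : a + b - 1 = k)
    (r : Fin 2) {c : ℕ} (hc : c < k) :
    IsLegal (gridGraph k) (join a b k ω₁ ω₂) (r, ⟨c, hc⟩) ↔
      (∃ h : c < a, IsLegal (gridGraph a) ω₁ (r, ⟨c, h⟩)) ∨
      (∃ d : Fin b, c = d + (a - 1) ∧ IsLegal (gridGraph b) ω₂ (r, d)) := by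
  have := h₁.three_le; have := h₂.three_le
  constructor
  · intro hv
    have hck : c ≠ 0 ∧ c ≠ k - 1 := by
      constructor <;> rintro rfl <;>
        exact not_isLegal_of_eq_false ((h₁.append h₂ hk).eq_false_of_boundary r (by simp)) hv
    by_cases hca : c + 1 < a
    · exact Or.inl ⟨by omega, (isLegal_join_left r (by omega) (by omega) hca).1 hv⟩
    have hcol : c ≠ a - 1 := by
      rintro rfl
      refine not_isLegal_of_eq_false ?_ hv
      rw [join_apply_left r hc (by omega)]
      exact h₁.eq_false_of_boundary r (Or.inr rfl)
    refine Or.inr ⟨⟨c - (a - 1), by omega⟩, by simp only; omega, ?_⟩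
    exact (isLegal_join_right hk (by omega) (by omega) (h₁.cut h₂) r (by omega)
      (d := c - (a - 1)) (by omega) (by omega)).1 hv
  · rintro (⟨hca, hv⟩ | ⟨⟨d, hd⟩, rfl, hv⟩)
    · have hint : c ≠ 0 ∧ c ≠ a - 1 := by
        constructor <;> rintro rfl <;>
          exact not_isLegal_of_eq_false (h₁.eq_false_of_boundary r (by simp)) hv
      exact (isLegal_join_left r (by omega) (by omega) (by omega)).2 hv
    · have hdb : d ≠ 0 ∧ d ≠ b - 1 := by
        constructor <;> rintro rfl <;>
          exact not_isLegal_of_eq_false (h₂.eq_false_of_boundary r (by simp)) hv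
      exact (isLegal_join_right hk (by omega) (by omega) (h₁.cut h₂) r (d := d) (by omega) rfl
        (by omega)).2 hv

theorem col_bounds_of_isLegal (h : IsBlockChain k ω) {r : Fin 2} {c : ℕ} {hc : c < k}
    (hv : IsLegal (gridGraph k) ω (r, ⟨c, hc⟩)) : 2 ≤ c ∧ c + 3 ≤ k := by
  induction h generalizing c with
  | single => exact ((isLegal_block_iff r _).1 hv).imp_right And.left
  | append h₁ h₂ hk ih₁ ih₂ =>
    rcases (isLegal_join_iff h₁ h₂ hk r hc).1 hv with ⟨hca, hv₁⟩ | ⟨⟨d, hd⟩, rfl, hv₂⟩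
    · have := ih₁ hv₁
      have := h₂.three_le
      omega
    · have := ih₂ hv₂
      have := h₁.three_le
      simp only at this ⊢
      omega

theorem successors_append (h₁ : IsBlockChain a ω₁) (h₂ : IsBlockChain b ω₂)
    (hk : a + b - 1 = k) :
    successors (gridGraph k) (join a b k ω₁ ω₂) =
      (successors (gridGraph a) ω₁).image (join a b k · ω₂) ∪
        (successors (gridGraph b) ω₂).image (join a b k ω₁ ·) := by
  ext ω
  simp only [Finset.mem_union, Finset.mem_image, mem_successors, Step]
  constructor
  · rintro ⟨⟨r, c, hc⟩, hv, rfl⟩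
    rcases (isLegal_join_iff h₁ h₂ hk r hc).1 hv with ⟨hca, hv₁⟩ | ⟨⟨d, hd⟩, rfl, hv₂⟩
    · have := h₁.col_bounds_of_isLegal hv₁
      exact Or.inl ⟨_, ⟨_, hv₁, rfl⟩, (move_join_left r hc (by omega)).symm⟩
    · have := h₂.col_bounds_of_isLegal hv₂
      exact Or.inr ⟨_, ⟨_, hv₂, rfl⟩, (move_join_right hk r hc rfl this.1).symm⟩
  · rintro (⟨_, ⟨⟨r, c, hc⟩, hv₁, rfl⟩, rfl⟩ | ⟨_, ⟨⟨r, d, hd⟩, hv₂, rfl⟩, rfl⟩)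
    · have := h₁.col_bounds_of_isLegal hv₁
      have := h₂.three_le
      have hck : c < k := by omega
      exact ⟨(r, ⟨c, hck⟩), (isLegal_join_iff h₁ h₂ hk r hck).2 (Or.inl ⟨hc, hv₁⟩),
        (move_join_left r hck (by omega)).symm⟩
    · have hd2 := (h₂.col_bounds_of_isLegal hv₂).1
      have := h₁.three_le
      have hck : d + (a - 1) < k := by omega
      exact ⟨(r, ⟨d + (a - 1), hck⟩),
        (isLegal_join_iff h₁ h₂ hk r hck).2 (Or.inr ⟨⟨d, hd⟩, rfl, hv₂⟩),
        (move_join_right hk r hck rfl hd2).symm⟩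

theorem of_mem_successors (h : IsBlockChain k ω) {ω' : Fin 2 × Fin k → Bool}
    (hω' : ω' ∈ successors (gridGraph k) ω) : IsBlockChain k ω' := by
  induction h with
  | single =>
    obtain ⟨⟨r, j, hj⟩, hv, rfl⟩ := mem_successors.1 hω'
    obtain ⟨hj2, hjk, -⟩ := (isLegal_block_iff r _).1 hv
    rw [move_block hj2 hjk r]
    exact .append (.single _ _ (by omega)) (.single _ _ (by omega)) (by omega)
  | append h₁ h₂ hk ih₁ ih₂ =>
    rw [successors_append h₁ h₂ hk, Finset.mem_union, Finset.mem_image, Finset.mem_image] at hω'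
    rcases hω' with ⟨ω₁', hω₁', rfl⟩ | ⟨ω₂', hω₂', rfl⟩
    · exact .append (ih₁ hω₁') h₂ hk
    · exact .append h₁ (ih₂ hω₂') hk

end IsBlockChain

theorem grundy_join {a b k : ℕ} {ω₁ : Fin 2 × Fin a → Bool} {ω₂ : Fin 2 × Fin b → Bool}
    (h₁ : IsBlockChain a ω₁) (h₂ : IsBlockChain b ω₂) (hk : a + b - 1 = k) :
    grundy (gridGraph k) (join a b k ω₁ ω₂) =
      grundy (gridGraph a) ω₁ ^^^ grundy (gridGraph b) ω₂ := by
  have hleft : ((successors (gridGraph a) ω₁).image (join a b k · ω₂)).image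
      (grundy (gridGraph k)) = ((successors (gridGraph a) ω₁).image (grundy (gridGraph a))).image
        (· ^^^ grundy (gridGraph b) ω₂) := by
    rw [Finset.image_image, Finset.image_image]
    exact Finset.image_congr fun ω hω => grundy_join (h₁.of_mem_successors hω) h₂ hk
  have hright : ((successors (gridGraph b) ω₂).image (join a b k ω₁ ·)).image
      (grundy (gridGraph k)) = ((successors (gridGraph b) ω₂).image (grundy (gridGraph b))).image
        (grundy (gridGraph a) ω₁ ^^^ ·) := by
    rw [Finset.image_image, Finset.image_image]
    exact Finset.image_congr fun ω hω => grundy_join h₁ (h₂.of_mem_successors hω) hk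
  rw [grundy_eq_mex_successors (gridGraph k), h₁.successors_append h₂ hk, Finset.image_union,
    hleft, hright, grundy_eq_mex_successors (gridGraph a) ω₁,
    grundy_eq_mex_successors (gridGraph b) ω₂, mex_union_image_xor]
termination_by weight ω₁ + weight ω₂
decreasing_by
  all_goals have := weight_lt_of_mem_successors hω; omega

/-- The flag stands for `s == t` in `block s t k`: a move at `(r, i - 1)` leaves blocks with
flags `s == r + 1` and `r + 1 == t`, and the second is determined by the first and `s == t`. -/
noncomputable def blockNim (k : ℕ) (e : Bool) : ℕ :=
  mex (((Finset.Icc 3 (k - 2)) ×ˢ (Finset.univ : Finset Bool)).attach.image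
    fun p => blockNim p.1.1 p.1.2 ^^^ blockNim (k + 1 - p.1.1) (p.1.2 == e))
termination_by k
decreasing_by
  all_goals
    have := (Finset.mem_product.1 p.2).1
    rw [Finset.mem_Icc] at this
    omega

theorem blockNim_eq (k : ℕ) (e : Bool) :
    blockNim k e = mex (((Finset.Icc 3 (k - 2)) ×ˢ (Finset.univ : Finset Bool)).image
      fun p => blockNim p.1 p.2 ^^^ blockNim (k + 1 - p.1) (p.2 == e)) := by
  rw [blockNim]
  congr 1
  ext n
  simp

theorem fin_two_beq_eq_beq_beq (s t u : Fin 2) : (u == t) = ((s == u) == (s == t)) := by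
  revert s t u
  decide

theorem grundy_block (k : ℕ) (s t : Fin 2) :
    grundy (gridGraph k) (block s t k) = blockNim k (s == t) := by
  have hmove : ∀ (r : Fin 2) (j : ℕ) (hj : 2 ≤ j) (hjk : j + 3 ≤ k),
      grundy (gridGraph k) (move (gridGraph k) (block s t k) (r, ⟨j, by omega⟩)) =
        blockNim (j + 1) (s == r + 1) ^^^ blockNim (k - j) ((s == r + 1) == (s == t)) := by
    intro r j hj hjk
    rw [move_block hj hjk r, grundy_join (.single _ _ (by omega)) (.single _ _ (by omega))
      (by omega), grundy_block, grundy_block, ← fin_two_beq_eq_beq_beq]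
  rw [grundy_eq_mex_successors, blockNim_eq]
  congr 1
  ext x
  simp only [Finset.mem_image, mem_successors, Step, Finset.mem_product, Finset.mem_Icc,
    Finset.mem_univ, and_true]
  constructor
  · rintro ⟨_, ⟨⟨r, j, hj⟩, hv, rfl⟩, rfl⟩
    obtain ⟨hj2, hjk, -⟩ := (isLegal_block_iff r _).1 hv
    refine ⟨(j + 1, s == r + 1), ⟨by omega, by omega⟩, ?_⟩
    rw [hmove r j hj2 hjk, show k + 1 - (j + 1) = k - j by omega]
  · rintro ⟨⟨i, e⟩, ⟨hi3, hik⟩, rfl⟩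
    obtain ⟨r, hr⟩ := (by decide : ∀ (s : Fin 2) (e : Bool), ∃ r : Fin 2, (s == r + 1) = e) s e
    by_cases hex : k = 5 ∧ s = t ∧ r ≠ s
    · -- `(r, 2)` is not legal, but every option of this block has value `x ^^^ x = 0`.
      obtain ⟨rfl, rfl, -⟩ := hex
      obtain rfl : i = 3 := by omega
      refine ⟨_, ⟨(s, ⟨2, by omega⟩), (isLegal_block_iff s _).2 (by simp), rfl⟩, ?_⟩
      rw [hmove s 2 le_rfl le_rfl]
      simp
    · refine ⟨_, ⟨(r, ⟨i - 1, by omega⟩),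
        (isLegal_block_iff r _).2 ⟨by omega, by omega, hex⟩, rfl⟩, ?_⟩
      rw [hmove r (i - 1) (by omega) (by omega), hr, show i - 1 + 1 = i by omega,
        show k - (i - 1) = k + 1 - i by omega]
termination_by k

theorem Hpos_eq_block (m : ℕ) : Hpos m = block 0 0 m := by
  by_cases h3 : m = 3
  · subst h3
    decide
  funext ⟨r, c⟩
  have := r.isLt; have := c.isLt
  simp only [Hpos, block, if_neg h3, and_true, ← decide_not]
  split_ifs <;> rw [decide_eq_decide] <;> simp only [Fin.ext_iff, Fin.val_zero] at * <;> omega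

theorem Dpos_eq_block (m : ℕ) : Dpos m = block 0 1 m := by
  funext ⟨r, c⟩
  have := r.isLt; have := c.isLt
  simp only [Dpos, block, Fin.zero_eq_one_iff, ← decide_not]
  split_ifs <;> rw [decide_eq_decide] <;>
    simp only [Fin.ext_iff, Fin.val_zero, Fin.val_one] at * <;> omega

theorem GH_eq_blockNim (m : ℕ) : GH m = blockNim m true := by
  rw [GH, Hpos_eq_block, grundy_block]
  rfl

theorem GD_eq_blockNim (m : ℕ) : GD m = blockNim m false := by
  rw [GD, Dpos_eq_block, grundy_block]
  rfl

theorem blockNim_true (m : ℕ) :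
    blockNim m true =
      mex ((Finset.Icc 3 (m - 2)).image (fun i => blockNim i true ^^^ blockNim (m + 1 - i) true) ∪
        (Finset.Icc 3 (m - 2)).image
          (fun i => blockNim i false ^^^ blockNim (m + 1 - i) false)) := by
  rw [blockNim_eq, image_product_univ_bool]
  rfl

end Toggle

theorem statement5_general (m : ℕ) :
    Toggle.GH m = Toggle.mex
      (((Finset.Icc 3 ((m + 1) / 2)).image
          (fun i => Toggle.GH i ^^^ Toggle.GH (m + 1 - i))) ∪
       ((Finset.Icc 3 ((m + 1) / 2)).image
          (fun i => Toggle.GD i ^^^ Toggle.GD (m + 1 - i)))) := by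
  simp only [Toggle.GH_eq_blockNim, Toggle.GD_eq_blockNim]
  rw [Toggle.image_Icc_half_xor (Toggle.blockNim · true),
    Toggle.image_Icc_half_xor (Toggle.blockNim · false)]
  exact Toggle.blockNim_true m

/-- for `m ≥ 4`,
`G(H_m) = mex { G(H_i) ^^^ G(H_{m+1-i}), G(D_i) ^^^ G(D_{m+1-i}) : 3 ≤ i ≤ s }`
where `s = ⌊(m+1)/2⌋`. -/
theorem statement5 (m : ℕ) (hm : 4 ≤ m) :
    Toggle.GH m = Toggle.mex
      (((Finset.Icc 3 ((m + 1) / 2)).image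
          (fun i => Toggle.GH i ^^^ Toggle.GH (m + 1 - i))) ∪
       ((Finset.Icc 3 ((m + 1) / 2)).image
          (fun i => Toggle.GD i ^^^ Toggle.GD (m + 1 - i)))) :=
  statement5_general m
end

section
/- Let m > 3 and let k, ℓ be integers relatively prime to m with 2 ≤ k, ℓ ≤ m−2 and kℓ ≡ 1 (mod m). Then the generalized Petersen graphs P(m,k) and P(m,ℓ) are isomorphic as simple graphs. -/
/-!
Multiplying indices by `ℓ` and exchanging the two rims maps `P(m,k)` onto `P(m,ℓ)`: an outer
edge `u_x u_{x+1}` goes to the inner edge `w_{ℓx} w_{ℓx+ℓ}`, an inner edge `w_x w_{x+k}` goes to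
the outer edge `u_{ℓx} u_{ℓx+ℓk} = u_{ℓx+1}`, and spokes go to spokes.
-/

open SimpleGraph

def SimpleGraph.fromRelIso {V W : Type*} (e : V ≃ W) {r : V → V → Prop} {r' : W → W → Prop}
    (h : ∀ a b, r a b ∨ r b a ↔ r' (e a) (e b) ∨ r' (e b) (e a)) :
    fromRel r ≃g fromRel r' where
  toEquiv := e
  map_rel_iff' {a b} := by simp only [fromRel_adj, ne_eq, e.injective.eq_iff, h]

open Fin.CommRing in
theorem Fin.val_add_natCast_mod_eq_iff {m : ℕ} [NeZero m] (a b : Fin m) (k : ℕ) :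
    ((a : ℕ) + k) % m = b ↔ a + (k : Fin m) = b := by
  rw [Fin.ext_iff, Fin.val_add, Fin.val_natCast, Nat.add_mod_mod]

namespace Toggle

def petersenOn (G : Type*) [Add G] (s t : G) : SimpleGraph (Fin 2 × G) :=
  fromRel fun a b =>
    (a.1 = 0 ∧ b.1 = 0 ∧ a.2 + s = b.2) ∨ (a.1 = 0 ∧ b.1 = 1 ∧ a.2 = b.2) ∨
    (a.1 = 1 ∧ b.1 = 1 ∧ a.2 + t = b.2)

def petersenOnSwap (G : Type*) [Add G] (s t : G) : petersenOn G s t ≃g petersenOn G t s :=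
  fromRelIso ((Equiv.swap 0 1).prodCongr (Equiv.refl G)) <| by
    rintro ⟨x, g⟩ ⟨y, h⟩
    fin_cases x <;> fin_cases y <;> simp [or_comm, @eq_comm _ h g]

def petersenOnCongr {G H : Type*} [AddZeroClass G] [AddZeroClass H] (φ : G ≃+ H)
    {s t : G} {s' t' : H} (hs : φ s = s') (ht : φ t = t') :
    petersenOn G s t ≃g petersenOn H s' t' :=
  fromRelIso ((Equiv.refl (Fin 2)).prodCongr φ.toEquiv) <| by
    rintro ⟨x, g⟩ ⟨y, h⟩
    simp [← hs, ← ht, ← map_add]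

def petersenOnIsoOfMulEqOne {R : Type*} [CommSemiring R] {k l : R} (hlk : l * k = 1) :
    petersenOn R 1 k ≃g petersenOn R 1 l :=
  let u : Rˣ := Units.mkOfMulEqOne l k hlk
  (petersenOnSwap R 1 k).trans <| petersenOnCongr (DistribMulAction.toAddEquiv R u)
    (by simpa [u, Units.smul_def] using hlk) (by simp [u, Units.smul_def])

open Fin.CommRing in
theorem petersen_eq_petersenOn_fin (m k : ℕ) [NeZero m] :
    petersen m k = petersenOn (Fin m) 1 k := by
  simp only [petersen, petersenOn, Fin.val_add_natCast_mod_eq_iff, Nat.cast_one]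

open Fin.CommRing in
def petersenIsoPetersenOnZMod (m k : ℕ) [NeZero m] : petersen m k ≃g petersenOn (ZMod m) 1 k :=
  petersen_eq_petersenOn_fin m k ▸ petersenOnCongr (ZMod.finEquiv m).toAddEquiv
    (map_one (ZMod.finEquiv m)) (map_natCast (ZMod.finEquiv m) k)

end Toggle

theorem statement7_general (m k l : ℕ) (hm : 3 < m)
    (hmod : k * l ≡ 1 [MOD m]) :
    Nonempty (Toggle.petersen m k ≃g Toggle.petersen m l) := by
  have : NeZero m := ⟨by omega⟩
  have hlk : (l : ZMod m) * k = 1 := by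
    rw [mul_comm]
    exact_mod_cast (ZMod.natCast_eq_natCast_iff _ _ _).2 hmod
  exact ⟨(Toggle.petersenIsoPetersenOnZMod m k).trans <|
    (Toggle.petersenOnIsoOfMulEqOne hlk).trans (Toggle.petersenIsoPetersenOnZMod m l).symm⟩

/-- for `m > 3` and `k, ℓ` coprime to `m` with `2 ≤ k, ℓ ≤ m - 2` and
`k * ℓ ≡ 1 (mod m)`, the generalized Petersen graphs `P(m,k)` and `P(m,ℓ)` are
isomorphic. -/
theorem statement7 (m k l : ℕ) (hm : 3 < m)
    (hk : Nat.Coprime k m) (hl : Nat.Coprime l m)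
    (hk2 : 2 ≤ k) (hkm : k ≤ m - 2) (hl2 : 2 ≤ l) (hlm : l ≤ m - 2)
    (hmod : k * l ≡ 1 [MOD m]) :
    Nonempty (Toggle.petersen m k ≃g Toggle.petersen m l) :=
  statement7_general m k l hm hmod
end

section
/- Let m > 3 and let k_1, k_2 be integers with 1 ≤ k_1, k_2 ≤ ⌊m/2⌋ and k_1 k_2 ≡ 1 (mod m). Then the Nimber of the Toggle position P_{0,1}(m,k_1) equals the Nimber of the Toggle position P_{1,0}(m,k_2). -/
namespace Toggle

set_option linter.unusedSectionVars false

variable {V : Type*} [Fintype V] [DecidableEq V] {W : Type*} [Fintype W] [DecidableEq W]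

lemma closedNbhd_map (G : SimpleGraph V) [DecidableRel G.Adj] (G' : SimpleGraph W)
    [DecidableRel G'.Adj] (e : V ≃ W) (hAdj : ∀ a b, G.Adj a b ↔ G'.Adj (e a) (e b)) (v : V) :
    closedNbhd G' (e v) = (closedNbhd G v).image e := by
  ext u
  simp only [closedNbhd, Finset.mem_image, Finset.mem_insert, SimpleGraph.mem_neighborFinset]
  constructor
  · rintro (h | h)
    · exact ⟨v, Or.inl rfl, h.symm⟩
    · exact ⟨e.symm u, Or.inr (by rw [hAdj]; simpa using h), e.apply_symm_apply u⟩
  · rintro ⟨x, hx | hx, rfl⟩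
    · subst hx; exact Or.inl rfl
    · exact Or.inr ((hAdj v x).mp hx)

lemma mem_closedNbhd_map (G : SimpleGraph V) [DecidableRel G.Adj] (G' : SimpleGraph W)
    [DecidableRel G'.Adj] (e : V ≃ W) (hAdj : ∀ a b, G.Adj a b ↔ G'.Adj (e a) (e b)) (v : V)
    (u : W) : u ∈ closedNbhd G' (e v) ↔ e.symm u ∈ closedNbhd G v := by
  rw [closedNbhd_map G G' e hAdj]
  constructor
  · intro h; rcases Finset.mem_image.mp h with ⟨x, hx, rfl⟩; simpa using hx
  · intro h; exact Finset.mem_image.mpr ⟨_, h, e.apply_symm_apply u⟩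

lemma move_map (G : SimpleGraph V) [DecidableRel G.Adj] (G' : SimpleGraph W)
    [DecidableRel G'.Adj] (e : V ≃ W) (hAdj : ∀ a b, G.Adj a b ↔ G'.Adj (e a) (e b))
    (ω : V → Bool) (v : V) :
    move G' (ω ∘ e.symm) (e v) = (move G ω v) ∘ e.symm := by
  funext u
  simp only [move, Function.comp, mem_closedNbhd_map G G' e hAdj]

lemma nbhdWeight_map (G : SimpleGraph V) [DecidableRel G.Adj] (G' : SimpleGraph W)
    [DecidableRel G'.Adj] (e : V ≃ W) (hAdj : ∀ a b, G.Adj a b ↔ G'.Adj (e a) (e b))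
    (ω : V → Bool) (v : V) :
    nbhdWeight G' (ω ∘ e.symm) (e v) = nbhdWeight G ω v := by
  unfold nbhdWeight
  rw [closedNbhd_map G G' e hAdj, Finset.filter_image,
    Finset.card_image_of_injective _ e.injective]
  congr 1
  ext x
  simp

lemma weight_comp (e : V ≃ W) (ω : V → Bool) : weight (ω ∘ e.symm) = weight ω := by
  unfold weight
  rw [← Finset.card_image_of_injective (Finset.univ.filter fun u => ω u = true) e.injective]
  congr 1
  ext u
  simp only [Finset.mem_filter, Finset.mem_univ, true_and, Finset.mem_image, Function.comp]
  constructor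
  · intro h; exact ⟨e.symm u, h, by simp⟩
  · rintro ⟨x, hx, rfl⟩; simpa using hx

lemma isLegal_map (G : SimpleGraph V) [DecidableRel G.Adj] (G' : SimpleGraph W)
    [DecidableRel G'.Adj] (e : V ≃ W) (hAdj : ∀ a b, G.Adj a b ↔ G'.Adj (e a) (e b))
    (ω : V → Bool) (v : V) :
    IsLegal G' (ω ∘ e.symm) (e v) ↔ IsLegal G ω v := by
  unfold IsLegal
  rw [move_map G G' e hAdj, nbhdWeight_map G G' e hAdj, nbhdWeight_map G G' e hAdj]
  simp

lemma grundy_map (G : SimpleGraph V) [DecidableRel G.Adj] (G' : SimpleGraph W)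
    [DecidableRel G'.Adj] (e : V ≃ W) (hAdj : ∀ a b, G.Adj a b ↔ G'.Adj (e a) (e b))
    (ω : V → Bool) : grundy G ω = grundy G' (ω ∘ e.symm) := by
  suffices H : ∀ n, ∀ ω : V → Bool, weight ω = n → grundy G ω = grundy G' (ω ∘ e.symm) from
    H _ ω rfl
  intro n
  induction n using Nat.strong_induction_on with
  | _ n ih =>
    intro ω hn
    rw [grundy, grundy]
    congr 1
    ext x
    simp only [Finset.mem_image, Finset.mem_attach, true_and, Subtype.exists]
    constructor
    · rintro ⟨v, hv, rfl⟩
      have hv' : IsLegal G ω v := (Finset.mem_filter.mp hv).2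
      refine ⟨e v, Finset.mem_filter.mpr ⟨Finset.mem_univ _,
        (isLegal_map G G' e hAdj ω v).mpr hv'⟩, ?_⟩
      rw [move_map G G' e hAdj]
      exact (ih _ (hn ▸ weight_move_lt G hv') _ rfl).symm
    · rintro ⟨w, hw, rfl⟩
      have hw' : IsLegal G ω (e.symm w) := by
        have := (isLegal_map G G' e hAdj ω (e.symm w))
        rw [e.apply_symm_apply] at this
        exact this.mp (Finset.mem_filter.mp hw).2
      refine ⟨e.symm w, Finset.mem_filter.mpr ⟨Finset.mem_univ _, hw'⟩, ?_⟩
      have : move G' (ω ∘ e.symm) w = (move G ω (e.symm w)) ∘ e.symm := by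
        have := move_map G G' e hAdj ω (e.symm w)
        rwa [e.apply_symm_apply] at this
      rw [this]
      exact ih _ (hn ▸ weight_move_lt G hw') _ rfl

end Toggle

namespace Toggle
section
variable {m k1 k2 : ℕ}

lemma cancel_mod (hmod : k1 * k2 ≡ 1 [MOD m]) (x y : ℕ) : k2 * x ≡ k2 * y [MOD m] ↔ x ≡ y [MOD m] := by
  constructor
  · intro h
    have h1 : k1 * (k2 * x) ≡ k1 * (k2 * y) [MOD m] := h.mul_left k1
    rw [← mul_assoc, ← mul_assoc] at h1
    have hx : k1 * k2 * x ≡ x [MOD m] := by simpa using hmod.mul_right x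
    have hy : k1 * k2 * y ≡ y [MOD m] := by simpa using hmod.mul_right y
    exact hx.symm.trans (h1.trans hy)
  · exact fun h => h.mul_left k2

lemma L1 (hmod : k1 * k2 ≡ 1 [MOD m]) (x y : ℕ) (hy : y < m) :
    (x + 1) % m = y ↔ ((k2 * x) % m + k2) % m = (k2 * y) % m := by
  rw [Nat.mod_add_mod]
  have h1 : ((x + 1) % m = y) ↔ (x + 1 ≡ y [MOD m]) := by
    unfold Nat.ModEq; rw [Nat.mod_eq_of_lt hy]
  have h2 : k2 * x + k2 = k2 * (x + 1) := by ring
  rw [h1, h2]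
  exact ((cancel_mod hmod (x+1) y)).symm

lemma L2 (hmod : k1 * k2 ≡ 1 [MOD m]) (x y : ℕ) (hy : y < m) :
    (x + k1) % m = y ↔ ((k2 * x) % m + 1) % m = (k2 * y) % m := by
  rw [Nat.mod_add_mod]
  have h1 : ((x + k1) % m = y) ↔ (x + k1 ≡ y [MOD m]) := by
    unfold Nat.ModEq; rw [Nat.mod_eq_of_lt hy]
  have hk : k2 * x + 1 ≡ k2 * (x + k1) [MOD m] := by
    have : (1 : ℕ) ≡ k2 * k1 [MOD m] := by rw [mul_comm]; exact hmod.symm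
    calc k2 * x + 1 ≡ k2 * x + k2 * k1 [MOD m] := this.add_left _
      _ = k2 * (x + k1) := by ring
  have h3 : (k2 * x + 1) % m = (k2 * y) % m ↔ (k2 * (x + k1) ≡ k2 * y [MOD m]) :=
    ⟨fun h => hk.symm.trans h, fun h => hk.trans h⟩
  rw [h1, h3]
  exact ((cancel_mod hmod (x + k1) y)).symm

lemma Linj (hmod : k1 * k2 ≡ 1 [MOD m]) (x y : Fin m) : (k2 * (x:ℕ)) % m = (k2 * (y:ℕ)) % m ↔ x = y := by
  rw [show ((k2 * (x:ℕ)) % m = (k2 * (y:ℕ)) % m) ↔ (k2 * (x:ℕ) ≡ k2 * (y:ℕ) [MOD m]) from Iff.rfl,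
    cancel_mod hmod]
  unfold Nat.ModEq
  rw [Nat.mod_eq_of_lt x.2, Nat.mod_eq_of_lt y.2, Fin.val_inj]

lemma Linj' (hmod : k1 * k2 ≡ 1 [MOD m]) {x y : Fin m} {hx : k2 * (x:ℕ) % m < m}
    {hy : k2 * (y:ℕ) % m < m} :
    (⟨k2 * (x:ℕ) % m, hx⟩ : Fin m) = ⟨k2 * (y:ℕ) % m, hy⟩ ↔ x = y := by
  rw [Fin.mk.injEq]; exact Linj hmod x y

def petEquiv (hm : 0 < m) (hmod : k1 * k2 ≡ 1 [MOD m]) : (Fin 2 × Fin m) ≃ (Fin 2 × Fin m) where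
  toFun p := (if p.1 = 0 then 1 else 0, ⟨(k2 * p.2) % m, Nat.mod_lt _ hm⟩)
  invFun p := (if p.1 = 0 then 1 else 0, ⟨(k1 * p.2) % m, Nat.mod_lt _ hm⟩)
  left_inv p := by
    obtain ⟨j, i⟩ := p
    refine Prod.ext ?_ (Fin.ext ?_)
    · fin_cases j <;> simp
    · show (k1 * ((k2 * (i:ℕ)) % m)) % m = i
      have h1 : k1 * ((k2 * (i:ℕ)) % m) ≡ k1 * (k2 * (i:ℕ)) [MOD m] :=
        (Nat.mod_modEq _ m).mul_left k1
      have h2 : k1 * (k2 * (i:ℕ)) ≡ (i:ℕ) [MOD m] := by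
        rw [← mul_assoc]; simpa using hmod.mul_right (i:ℕ)
      have := h1.trans h2
      unfold Nat.ModEq at this
      rw [Nat.mod_eq_of_lt i.2] at this
      exact this
  right_inv p := by
    obtain ⟨j, i⟩ := p
    refine Prod.ext ?_ (Fin.ext ?_)
    · fin_cases j <;> simp
    · show (k2 * ((k1 * (i:ℕ)) % m)) % m = i
      have h1 : k2 * ((k1 * (i:ℕ)) % m) ≡ k2 * (k1 * (i:ℕ)) [MOD m] :=
        (Nat.mod_modEq _ m).mul_left k2
      have h2 : k2 * (k1 * (i:ℕ)) ≡ (i:ℕ) [MOD m] := by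
        rw [← mul_assoc, mul_comm k2 k1]; simpa using hmod.mul_right (i:ℕ)
      have := h1.trans h2
      unfold Nat.ModEq at this
      rw [Nat.mod_eq_of_lt i.2] at this
      exact this

lemma pet_adj_map (hm : 0 < m) (hmod : k1 * k2 ≡ 1 [MOD m]) (a b : Fin 2 × Fin m) :
    (petersen m k1).Adj a b ↔
      (petersen m k2).Adj (petEquiv hm hmod a) (petEquiv hm hmod b) := by
  obtain ⟨a1, a2⟩ := a
  obtain ⟨b1, b2⟩ := b
  fin_cases a1 <;> fin_cases b1 <;>
    simp (config := { decide := true }) only [petersen, SimpleGraph.fromRel_adj, petEquiv,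
      Equiv.coe_fn_mk, ne_eq, Prod.mk.injEq, true_and, false_and, and_false, and_true,
      or_false, false_or, not_false_eq_true, if_true, if_false]
  · rw [← L1 hmod (a2:ℕ) (b2:ℕ) b2.2, ← L1 hmod (b2:ℕ) (a2:ℕ) a2.2, Linj' hmod]
  · rw [Linj' hmod]; exact eq_comm
  · rw [Linj' hmod]; exact eq_comm
  · rw [← L2 hmod (a2:ℕ) (b2:ℕ) b2.2, ← L2 hmod (b2:ℕ) (a2:ℕ) a2.2, Linj' hmod]

lemma P01_comp (hm : 0 < m) (hmod : k1 * k2 ≡ 1 [MOD m]) :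
    (P01 m) ∘ ⇑(petEquiv hm hmod).symm = P10 m := by
  funext p
  obtain ⟨j, i⟩ := p
  fin_cases j <;>
    simp (config := { decide := true }) [P01, P10, petEquiv, Equiv.symm, Equiv.coe_fn_symm_mk]

end
end Toggle

/-- for `m > 3` and `1 ≤ k₁, k₂ ≤ ⌊m/2⌋` with `k₁ k₂ ≡ 1 (mod m)`,
the Nimber of `P_{0,1}(m,k₁)` equals the Nimber of `P_{1,0}(m,k₂)`. -/
theorem statement8 (m k1 k2 : ℕ) (hm : 3 < m)
    (hk1 : 1 ≤ k1) (hk1' : k1 ≤ m / 2) (hk2 : 1 ≤ k2) (hk2' : k2 ≤ m / 2)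
    (hmod : k1 * k2 ≡ 1 [MOD m]) :
    Toggle.grundy (Toggle.petersen m k1) (Toggle.P01 m)
      = Toggle.grundy (Toggle.petersen m k2) (Toggle.P10 m) := by
  have hm0 : 0 < m := by omega
  rw [Toggle.grundy_map (Toggle.petersen m k1) (Toggle.petersen m k2)
    (Toggle.petEquiv hm0 hmod) (Toggle.pet_adj_map hm0 hmod) (Toggle.P01 m),
    Toggle.P01_comp hm0 hmod]
end
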